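/- Third UP-isomorphism theorem: Let A be a UP-algebra and H, K UP-ideals of A with H ⊆ K. Then (A/∼_H)/∼_{(K/∼_H)} is UP-isomorphic to A/∼_K, where K/∼_H = {(x)_{∼_H} : x ∈ K} is a UP-ideal of A/∼_H. -/
import Mathlib


class UPAlgebra (A : Type*) extends Mul A, Zero A where
  up1 : ∀ x y z : A, (y * z) * ((x * y) * (x * z)) = 0
  up2 : ∀ x : A, 0 * x = x
  up3 : ∀ x : A, x * 0 = 0
  up4 : ∀ x y : A, x * y = 0 → y * x = 0 → x = y

def IsUPIdeal {A : Type*} [UPAlgebra A] (B : Set A) : Prop :=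
  (0 : A) ∈ B ∧ ∀ x y z : A, x * (y * z) ∈ B → y ∈ B → x * z ∈ B

lemma up_self {A : Type*} [UPAlgebra A] (x : A) : x * x = 0 := by
  have h := UPAlgebra.up1 (0:A) 0 x
  simpa [UPAlgebra.up2, UPAlgebra.up3] using h

lemma mem_of_mul_mem {A : Type*} [UPAlgebra A] {K : Set A} (hK : IsUPIdeal K)
    {y z : A} (h1 : y * z ∈ K) (h2 : y ∈ K) : z ∈ K := by
  have := hK.2 0 y z (by simpa [UPAlgebra.up2] using h1) h2
  simpa [UPAlgebra.up2] using this

lemma mk_mem_image_iff {A : Type*} [UPAlgebra A] {H K : Set A}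
    (hK : IsUPIdeal K) (hHK : H ⊆ K) (x : A) :
    Quot.mk (fun x y : A => x * y ∈ H ∧ y * x ∈ H) x ∈
      Quot.mk (fun x y : A => x * y ∈ H ∧ y * x ∈ H) '' K ↔ x ∈ K := by
  constructor
  · rintro ⟨k, hk, hek⟩
    have hresp : ∀ a b : A, (a * b ∈ H ∧ b * a ∈ H) → (a ∈ K) = (b ∈ K) := by
      intro a b hab
      exact propext ⟨fun ha => mem_of_mul_mem hK (hHK hab.1) ha,
        fun hb => mem_of_mul_mem hK (hHK hab.2) hb⟩
    have := congrArg (Quot.lift (fun a => a ∈ K) hresp) hek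
    exact (show (k ∈ K) = (x ∈ K) from this) ▸ hk
  · intro hx
    exact ⟨x, hx, rfl⟩

theorem third_up_isomorphism {A : Type*} [UPAlgebra A] {H K : Set A}
    (hH : IsUPIdeal H) (hK : IsUPIdeal K) (hHK : H ⊆ K)
    (m1 : Quot (fun x y : A => x * y ∈ H ∧ y * x ∈ H) →
          Quot (fun x y : A => x * y ∈ H ∧ y * x ∈ H) →
          Quot (fun x y : A => x * y ∈ H ∧ y * x ∈ H))
    (hm1 : ∀ x y : A, m1 (Quot.mk _ x) (Quot.mk _ y) = Quot.mk _ (x * y))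
    (m2 : Quot (fun a b => m1 a b ∈ Quot.mk _ '' K ∧ m1 b a ∈ Quot.mk _ '' K) →
          Quot (fun a b => m1 a b ∈ Quot.mk _ '' K ∧ m1 b a ∈ Quot.mk _ '' K) →
          Quot (fun a b => m1 a b ∈ Quot.mk _ '' K ∧ m1 b a ∈ Quot.mk _ '' K))
    (hm2 : ∀ a b, m2 (Quot.mk _ a) (Quot.mk _ b) = Quot.mk _ (m1 a b))
    (m3 : Quot (fun x y : A => x * y ∈ K ∧ y * x ∈ K) →
          Quot (fun x y : A => x * y ∈ K ∧ y * x ∈ K) →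
          Quot (fun x y : A => x * y ∈ K ∧ y * x ∈ K))
    (hm3 : ∀ x y : A, m3 (Quot.mk _ x) (Quot.mk _ y) = Quot.mk _ (x * y)) :
    ((Quot.mk _ (0 : A) ∈ Quot.mk (fun x y : A => x * y ∈ H ∧ y * x ∈ H) '' K) ∧
     (∀ a b c, m1 a (m1 b c) ∈ Quot.mk _ '' K → b ∈ Quot.mk _ '' K →
        m1 a c ∈ Quot.mk _ '' K)) ∧
    ∃ φ : Quot (fun a b => m1 a b ∈ Quot.mk _ '' K ∧ m1 b a ∈ Quot.mk _ '' K) →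
          Quot (fun x y : A => x * y ∈ K ∧ y * x ∈ K),
      (∀ a b, φ (m2 a b) = m3 (φ a) (φ b)) ∧ Function.Bijective φ := by
  have memiff := mk_mem_image_iff (H := H) hK hHK
  refine ⟨⟨⟨0, hK.1, rfl⟩, ?_⟩, ?_⟩
  · intro a b c
    induction a using Quot.ind with | _ x =>
    induction b using Quot.ind with | _ y =>
    induction c using Quot.ind with | _ z =>
    rw [hm1, hm1, hm1, memiff, memiff, memiff]
    exact hK.2 x y z
  · -- define ψ : Quot relH → Quot relK
    refine ⟨Quot.lift (Quot.lift (Quot.mk (fun x y : A => x * y ∈ K ∧ y * x ∈ K))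
        (fun a b hab => Quot.sound ⟨hHK hab.1, hHK hab.2⟩)) ?_, ?_, ?_⟩
    · intro a b hab
      induction a using Quot.ind with | _ x =>
      induction b using Quot.ind with | _ y =>
      obtain ⟨h1, h2⟩ := hab
      rw [hm1, memiff] at h1
      rw [hm1, memiff] at h2
      exact Quot.sound ⟨h1, h2⟩
    · intro a b
      induction a using Quot.ind with | _ p =>
      induction b using Quot.ind with | _ q =>
      induction p using Quot.ind with | _ x =>
      induction q using Quot.ind with | _ y =>
      rw [hm2, hm1]
      simp only [Quot.lift_mk]
      rw [hm3]
    · constructor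
      · intro a b hab
        induction a using Quot.ind with | _ p =>
        induction b using Quot.ind with | _ q =>
        induction p using Quot.ind with | _ x =>
        induction q using Quot.ind with | _ y =>
        simp only [Quot.lift_mk] at hab
        have hg : ∀ x y : A, (x * y ∈ K ∧ y * x ∈ K) →
            Quot.mk (fun a b => m1 a b ∈ Quot.mk (fun x y : A => x * y ∈ H ∧ y * x ∈ H) '' K ∧
              m1 b a ∈ Quot.mk (fun x y : A => x * y ∈ H ∧ y * x ∈ H) '' K)
              (Quot.mk _ x) = Quot.mk _ (Quot.mk _ y) := by
          intro x y hxy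
          exact Quot.sound ⟨by rw [hm1, memiff]; exact hxy.1, by rw [hm1, memiff]; exact hxy.2⟩
        exact congrArg (Quot.lift (fun x : A => Quot.mk _ (Quot.mk _ x)) hg) hab
      · intro c
        induction c using Quot.ind with | _ x =>
        exact ⟨Quot.mk _ (Quot.mk _ x), rfl⟩
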